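/- For every n ≥ 3, the number of permutations of {1,...,n} avoiding 13-2 and containing exactly two occurrences of 23-1 equals 2^(n-1) - n - 1. -/

import Mathlib

/-- The value of the permutation at position `i` (0-indexed), or 0 if out of range. -/
def permVal {n : ℕ} (π : Equiv.Perm (Fin n)) (i : ℕ) : ℕ :=
  if h : i < n then (π ⟨i, h⟩ : ℕ) else 0

/-- Number of occurrences of the generalized pattern 12-3. -/
def occ12_3 {n : ℕ} (π : Equiv.Perm (Fin n)) : ℕ :=
  ((Finset.range n ×ˢ Finset.range n).filter (fun p =>
    p.1 + 1 < p.2 ∧ permVal π p.1 < permVal π (p.1 + 1) ∧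
      permVal π (p.1 + 1) < permVal π p.2)).card

/-- Number of occurrences of the generalized pattern 13-2. -/
def occ13_2 {n : ℕ} (π : Equiv.Perm (Fin n)) : ℕ :=
  ((Finset.range n ×ˢ Finset.range n).filter (fun p =>
    p.1 + 1 < p.2 ∧ permVal π p.1 < permVal π p.2 ∧
      permVal π p.2 < permVal π (p.1 + 1))).card

/-- Number of occurrences of the generalized pattern 21-3. -/
def occ21_3 {n : ℕ} (π : Equiv.Perm (Fin n)) : ℕ :=
  ((Finset.range n ×ˢ Finset.range n).filter (fun p =>
    p.1 + 1 < p.2 ∧ permVal π (p.1 + 1) < permVal π p.1 ∧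
      permVal π p.1 < permVal π p.2)).card

/-- Number of occurrences of the generalized pattern 23-1. -/
def occ23_1 {n : ℕ} (π : Equiv.Perm (Fin n)) : ℕ :=
  ((Finset.range n ×ˢ Finset.range n).filter (fun p =>
    p.1 + 1 < p.2 ∧ permVal π p.2 < permVal π p.1 ∧
      permVal π p.1 < permVal π (p.1 + 1))).card

/-- Number of occurrences of the generalized pattern 31-2. -/
def occ31_2 {n : ℕ} (π : Equiv.Perm (Fin n)) : ℕ :=
  ((Finset.range n ×ˢ Finset.range n).filter (fun p =>
    p.1 + 1 < p.2 ∧ permVal π (p.1 + 1) < permVal π p.2 ∧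
      permVal π p.2 < permVal π p.1)).card

/-- Number of occurrences of the generalized pattern 32-1. -/
def occ32_1 {n : ℕ} (π : Equiv.Perm (Fin n)) : ℕ :=
  ((Finset.range n ×ˢ Finset.range n).filter (fun p =>
    p.1 + 1 < p.2 ∧ permVal π p.2 < permVal π (p.1 + 1) ∧
      permVal π (p.1 + 1) < permVal π p.1)).card

/-!
Write `A n` for the number of these permutations. A maximal letter standing first or last can
play no part in an occurrence of 13-2 or 23-1, so deleting it gives a bijection onto the
permutations counted by `A n`; this accounts for `2 A n` permutations of length `n + 1`. If the
maximum stands at an interior position `t`, avoidance of 13-2 forces every later letter below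
`π (t - 1)`, and each of them yields an occurrence `(t - 1, j)` of 23-1, so `t ≥ n - 2`. Looking
at the last ascent before the peak then shows that the letters in front of it decrease, which
leaves exactly the `n` permutations `peakPerm n k`. Hence `A (n + 1) = 2 A n + n` for `n ≥ 3`,
and `A n = 0` for `n ≤ 3`.
-/

open Finset

theorem Finset.eq_or_eq_of_card_eq_two {α : Type*} [DecidableEq α] {s : Finset α} (hs : #s = 2)
    {a b c : α} (ha : a ∈ s) (hb : b ∈ s) (hab : a ≠ b) (hc : c ∈ s) : c = a ∨ c = b := by
  by_contra h
  push Not at h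
  have := two_lt_card.mpr ⟨a, ha, b, hb, c, hc, hab, h.1.symm, h.2.symm⟩
  omega

theorem StrictAntiOn.eqOn_of_mapsTo_finset {β : Type*} [LinearOrder β] {g h : ℕ → β} {m : ℕ}
    {V : Finset β} (hV : #V = m + 1) (hg : StrictAntiOn g (Set.Iic m))
    (hh : StrictAntiOn h (Set.Iic m)) (hgV : Set.MapsTo g (Set.Iic m) V)
    (hhV : Set.MapsTo h (Set.Iic m) V) : Set.EqOn g h (Set.Iic m) := by
  have key : ∀ g : ℕ → β, StrictAntiOn g (Set.Iic m) → Set.MapsTo g (Set.Iic m) V →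
      ∀ x : Fin (m + 1), g (m - x) = V.orderEmbOfFin hV x := by
    intro g hg hgV
    refine congrFun (orderEmbOfFin_unique hV (f := fun x => g (m - x)) ?_ ?_)
    · exact fun x => hgV (by simp only [Set.mem_Iic]; omega)
    · intro x y hxy
      have : (x : ℕ) < y := hxy
      exact hg (by simp only [Set.mem_Iic]; omega) (by simp only [Set.mem_Iic]; omega) (by omega)
  intro p hp
  have hp : p ≤ m := hp
  have e : m - (m - p) = p := by omega
  have hg' := key g hg hgV ⟨m - p, by omega⟩
  have hh' := key h hh hhV ⟨m - p, by omega⟩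
  simp only [e] at hg' hh'
  rw [hg', hh']

section Occurrences

variable {C : ℕ → ℕ → ℕ → Prop} [∀ a b c, Decidable (C a b c)] {N : ℕ} {f g : ℕ → ℕ}

def patternOccs (N : ℕ) (C : ℕ → ℕ → ℕ → Prop) [∀ a b c, Decidable (C a b c)] (f : ℕ → ℕ) :
    Finset (ℕ × ℕ) :=
  (range N ×ˢ range N).filter fun p => p.1 + 1 < p.2 ∧ C (f p.1) (f (p.1 + 1)) (f p.2)

theorem mem_patternOccs {i j : ℕ} :
    (i, j) ∈ patternOccs N C f ↔ i + 1 < j ∧ j < N ∧ C (f i) (f (i + 1)) (f j) := by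
  simp only [patternOccs, mem_filter, mem_product, mem_range]
  constructor
  · rintro ⟨⟨-, hj⟩, hij, hC⟩
    exact ⟨hij, hj, hC⟩
  · rintro ⟨hij, hj, hC⟩
    exact ⟨⟨by omega, hj⟩, hij, hC⟩

theorem patternOccs_congr (h : ∀ i < N, f i = g i) : patternOccs N C f = patternOccs N C g := by
  ext ⟨i, j⟩
  simp only [mem_patternOccs]
  constructor <;> rintro ⟨hij, hj, hC⟩ <;> refine ⟨hij, hj, ?_⟩
  · rwa [← h i (by omega), ← h (i + 1) (by omega), ← h j hj]
  · rwa [h i (by omega), h (i + 1) (by omega), h j hj]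

theorem patternOccs_eq_empty_iff :
    patternOccs N C f = ∅ ↔ ∀ i j, i + 1 < j → j < N → ¬ C (f i) (f (i + 1)) (f j) := by
  simp only [eq_empty_iff_forall_notMem, Prod.forall, mem_patternOccs]
  exact ⟨fun h i j hij hj hC => h i j ⟨hij, hj, hC⟩, fun h i j ⟨hij, hj, hC⟩ => h i j hij hj hC⟩

theorem patternOccs_subset_of_le_three (hN : N ≤ 3) : patternOccs N C f ⊆ {(0, 2)} := by
  rintro ⟨i, j⟩ h
  rw [mem_patternOccs] at h
  rw [mem_singleton, Prod.mk.injEq]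
  omega

theorem patternOccs_succ_of_forall_not_last (h : ∀ i, i + 1 < N → ¬ C (f i) (f (i + 1)) (f N)) :
    patternOccs (N + 1) C f = patternOccs N C f := by
  ext ⟨i, j⟩
  simp only [mem_patternOccs]
  refine ⟨fun ⟨hij, hj, hC⟩ => ⟨hij, ?_, hC⟩, fun ⟨hij, hj, hC⟩ => ⟨hij, by omega, hC⟩⟩
  rcases (Nat.lt_succ_iff.mp hj).lt_or_eq with hj | rfl
  · exact hj
  · exact absurd hC (h i hij)

theorem card_patternOccs_succ_of_forall_not_first (h : ∀ j ≤ N, ¬ C (f 0) (f 1) (f j)) :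
    #(patternOccs (N + 1) C f) = #(patternOccs N C fun i => f (i + 1)) := by
  have hpos : ∀ p ∈ patternOccs (N + 1) C f, 0 < p.1 ∧ p.1 + 1 < p.2 := by
    rintro ⟨i, j⟩ hp
    obtain ⟨hij, hj, hC⟩ := mem_patternOccs.mp hp
    refine ⟨Nat.pos_of_ne_zero ?_, hij⟩
    rintro rfl
    exact h j (by omega) hC
  symm
  refine card_nbij' (fun p => (p.1 + 1, p.2 + 1)) (fun p => (p.1 - 1, p.2 - 1)) ?_ ?_ ?_ ?_
  · rintro ⟨i, j⟩ hp
    rw [mem_coe, mem_patternOccs] at hp ⊢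
    exact ⟨by omega, by omega, hp.2.2⟩
  · rintro ⟨i, j⟩ hp
    obtain ⟨hi, -⟩ := hpos _ hp
    rw [mem_coe, mem_patternOccs] at hp ⊢
    obtain ⟨hij, hj, hC⟩ := hp
    obtain ⟨i, rfl⟩ : ∃ i', i = i' + 1 := Nat.exists_eq_add_one.mpr hi
    obtain ⟨j, rfl⟩ : ∃ j', j = j' + 1 := Nat.exists_eq_add_one.mpr (by omega)
    simp only [Nat.add_sub_cancel]
    exact ⟨by omega, by omega, hC⟩
  · intro p _
    simp
  · rintro ⟨i, j⟩ hp
    have := hpos _ hp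
    simp only [Prod.mk.injEq]
    omega

end Occurrences

section PermVal

variable {n : ℕ}

theorem permVal_of_lt (π : Equiv.Perm (Fin n)) {i : ℕ} (hi : i < n) :
    permVal π i = π ⟨i, hi⟩ := dif_pos hi

theorem permVal_lt (π : Equiv.Perm (Fin n)) {i : ℕ} (hi : i < n) : permVal π i < n := by
  rw [permVal_of_lt π hi]
  exact Fin.is_lt _

theorem permVal_le (π : Equiv.Perm (Fin (n + 1))) (i : ℕ) : permVal π i ≤ n := by
  unfold permVal
  split_ifs
  · exact Fin.is_le _
  · exact Nat.zero_le n

theorem permVal_injOn (π : Equiv.Perm (Fin n)) : Set.InjOn (permVal π) (Set.Iio n) := by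
  intro i hi j hj h
  rw [permVal_of_lt π hi, permVal_of_lt π hj] at h
  exact Fin.mk.inj_iff.mp (π.injective (Fin.ext h))

theorem exists_permVal_eq (π : Equiv.Perm (Fin n)) {v : ℕ} (hv : v < n) :
    ∃ i < n, permVal π i = v :=
  ⟨π.symm ⟨v, hv⟩, Fin.is_lt _, by simp [permVal_of_lt π (Fin.is_lt _)]⟩

theorem Equiv.Perm.ext_permVal {π σ : Equiv.Perm (Fin n)}
    (h : ∀ i < n, permVal π i = permVal σ i) : π = σ := by
  ext ⟨i, hi⟩
  simpa only [permVal_of_lt _ hi] using h i hi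

open Classical in
/-- The permutation `i ↦ g i` of `Fin n`; the identity unless `g` permutes `{0, …, n - 1}`. -/
noncomputable def permOfFun (n : ℕ) (g : ℕ → ℕ) : Equiv.Perm (Fin n) :=
  if h : Set.MapsTo g (Set.Iio n) (Set.Iio n) ∧ Set.InjOn g (Set.Iio n) then
    Equiv.ofBijective (fun i => ⟨g i, h.1 i.is_lt⟩) <| Finite.injective_iff_bijective.mp
      fun i j hij => Fin.ext (h.2 i.is_lt j.is_lt (Fin.mk.inj_iff.mp hij))
  else 1

theorem permVal_permOfFun {g : ℕ → ℕ} (hmaps : Set.MapsTo g (Set.Iio n) (Set.Iio n))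
    (hinj : Set.InjOn g (Set.Iio n)) {i : ℕ} (hi : i < n) : permVal (permOfFun n g) i = g i := by
  rw [permVal_of_lt _ hi, permOfFun, dif_pos ⟨hmaps, hinj⟩]
  rfl

noncomputable def insertMax (t : ℕ) (σ : Equiv.Perm (Fin n)) : Equiv.Perm (Fin (n + 1)) :=
  permOfFun (n + 1) fun p => if p = t then n else permVal σ (if p < t then p else p - 1)

noncomputable def eraseAt (t : ℕ) (π : Equiv.Perm (Fin (n + 1))) : Equiv.Perm (Fin n) :=
  permOfFun n fun p => permVal π (if p < t then p else p + 1)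

theorem permVal_insertMax {t : ℕ} (ht : t ≤ n) (σ : Equiv.Perm (Fin n)) {p : ℕ} (hp : p ≤ n) :
    permVal (insertMax t σ) p = if p = t then n else permVal σ (if p < t then p else p - 1) := by
  have hpred : ∀ q < n + 1, q ≠ t → (if q < t then q else q - 1) < n := by
    intro q hq hqt
    split_ifs <;> omega
  refine permVal_permOfFun ?_ ?_ (Nat.lt_succ_of_le hp)
  · intro q hq
    simp only [Set.mem_Iio] at hq ⊢
    by_cases hqt : q = t
    · rw [if_pos hqt]
      omega
    · rw [if_neg hqt]
      exact (permVal_lt σ (hpred q hq hqt)).trans (Nat.lt_succ_self n)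
  · intro q hq r hr h
    simp only [Set.mem_Iio] at hq hr
    by_cases hqt : q = t <;> by_cases hrt : r = t <;> simp only [hqt, hrt, if_true, if_false] at h
    · omega
    · exact absurd h (permVal_lt σ (hpred r hr hrt)).ne'
    · exact absurd h (permVal_lt σ (hpred q hq hqt)).ne
    · have := permVal_injOn σ (hpred q hq hqt) (hpred r hr hrt) h
      split_ifs at this <;> omega

theorem permVal_eraseAt {t : ℕ} {π : Equiv.Perm (Fin (n + 1))} (hπ : permVal π t = n) {p : ℕ}
    (hp : p < n) : permVal (eraseAt t π) p = permVal π (if p < t then p else p + 1) := by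
  have hsucc : ∀ q < n, (if q < t then q else q + 1) < n + 1 := by
    intro q hq
    split_ifs <;> omega
  have hne : ∀ q, (if q < t then q else q + 1) ≠ t := by
    intro q
    split_ifs <;> omega
  have ht : t < n + 1 := by
    by_contra ht
    rw [permVal, dif_neg ht] at hπ
    omega
  refine permVal_permOfFun ?_ ?_ hp
  · intro q hq
    simp only [Set.mem_Iio] at hq ⊢
    refine lt_of_le_of_ne (permVal_le π _) fun h => hne q ?_
    exact permVal_injOn π (hsucc q hq) ht (h.trans hπ.symm)
  · intro q hq r hr h
    have := permVal_injOn π (hsucc q hq) (hsucc r hr) h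
    split_ifs at this <;> omega

theorem permVal_insertMax_self {t : ℕ} (ht : t ≤ n) (σ : Equiv.Perm (Fin n)) :
    permVal (insertMax t σ) t = n := by
  rw [permVal_insertMax ht σ ht, if_pos rfl]

theorem eraseAt_insertMax {t : ℕ} (ht : t ≤ n) (σ : Equiv.Perm (Fin n)) :
    eraseAt t (insertMax t σ) = σ := by
  refine Equiv.Perm.ext_permVal fun p hp => ?_
  rw [permVal_eraseAt (permVal_insertMax_self ht σ) hp,
    permVal_insertMax ht σ (by split_ifs <;> omega)]
  split_ifs <;> first | rfl | omega

theorem insertMax_eraseAt {t : ℕ} (ht : t ≤ n) {π : Equiv.Perm (Fin (n + 1))}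
    (hπ : permVal π t = n) : insertMax t (eraseAt t π) = π := by
  refine Equiv.Perm.ext_permVal fun p hp => ?_
  rw [permVal_insertMax ht _ (Nat.le_of_lt_succ hp)]
  by_cases hpt : p = t
  · rw [if_pos hpt, hpt, hπ]
  · rw [if_neg hpt, permVal_eraseAt hπ (by split_ifs <;> omega)]
    split_ifs <;> first | rfl | omega | (congr 1; omega)

theorem card_filter_permVal_eq (P : Equiv.Perm (Fin (n + 1)) → Prop) [DecidablePred P] {t : ℕ}
    (ht : t ≤ n) :
    #{π | P π ∧ permVal π t = n} = #{σ : Equiv.Perm (Fin n) | P (insertMax t σ)} := by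
  refine card_nbij' (eraseAt t) (insertMax t) ?_ ?_ ?_ ?_
  · intro π hπ
    simp only [coe_filter, mem_univ, true_and, Set.mem_ofPred_eq] at hπ ⊢
    rw [insertMax_eraseAt ht hπ.2]
    exact hπ.1
  · intro σ hσ
    simp only [coe_filter, mem_univ, true_and, Set.mem_ofPred_eq] at hσ ⊢
    exact ⟨hσ, permVal_insertMax_self ht σ⟩
  · intro π hπ
    simp only [coe_filter, mem_univ, true_and, Set.mem_ofPred_eq] at hπ
    exact insertMax_eraseAt ht hπ.2
  · intro σ _
    exact eraseAt_insertMax ht σ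

end PermVal

section Patterns

variable {n : ℕ}

abbrev Pattern13_2 (a b c : ℕ) : Prop := a < c ∧ c < b

abbrev Pattern23_1 (a b c : ℕ) : Prop := c < a ∧ a < b

theorem occ13_2_eq_card_patternOccs (π : Equiv.Perm (Fin n)) :
    occ13_2 π = #(patternOccs n Pattern13_2 (permVal π)) := rfl

theorem occ23_1_eq_card_patternOccs (π : Equiv.Perm (Fin n)) :
    occ23_1 π = #(patternOccs n Pattern23_1 (permVal π)) := rfl

def IsGood (π : Equiv.Perm (Fin n)) : Prop := occ13_2 π = 0 ∧ occ23_1 π = 2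

instance : DecidablePred (IsGood (n := n)) := fun _ => instDecidableAnd

theorem isGood_iff (π : Equiv.Perm (Fin n)) :
    IsGood π ↔ patternOccs n Pattern13_2 (permVal π) = ∅ ∧
      #(patternOccs n Pattern23_1 (permVal π)) = 2 := by
  rw [IsGood, occ13_2_eq_card_patternOccs, occ23_1_eq_card_patternOccs, card_eq_zero]

theorem card_patternOccs_insertMax_zero {C : ℕ → ℕ → ℕ → Prop} [∀ a b c, Decidable (C a b c)]
    (hC : ∀ b c, b ≤ n → c ≤ n → ¬ C n b c) (σ : Equiv.Perm (Fin n)) :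
    #(patternOccs (n + 1) C (permVal (insertMax 0 σ))) = #(patternOccs n C (permVal σ)) := by
  rw [card_patternOccs_succ_of_forall_not_first, patternOccs_congr]
  · intro i hi
    rw [permVal_insertMax (Nat.zero_le n) σ hi]
    simp
  · intro j _
    rw [permVal_insertMax_self (Nat.zero_le n)]
    exact hC _ _ (permVal_le _ _) (permVal_le _ _)

theorem patternOccs_insertMax_last {C : ℕ → ℕ → ℕ → Prop} [∀ a b c, Decidable (C a b c)]
    (hC : ∀ a b, a ≤ n → b ≤ n → ¬ C a b n) (σ : Equiv.Perm (Fin n)) :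
    patternOccs (n + 1) C (permVal (insertMax n σ)) = patternOccs n C (permVal σ) := by
  rw [patternOccs_succ_of_forall_not_last, patternOccs_congr]
  · intro i hi
    rw [permVal_insertMax le_rfl σ hi.le, if_neg hi.ne, if_pos hi]
  · intro i _
    rw [permVal_insertMax_self le_rfl]
    exact hC _ _ (permVal_le _ _) (permVal_le _ _)

theorem isGood_insertMax_zero (σ : Equiv.Perm (Fin n)) : IsGood (insertMax 0 σ) ↔ IsGood σ := by
  rw [IsGood, IsGood, occ13_2_eq_card_patternOccs, occ23_1_eq_card_patternOccs,
    occ13_2_eq_card_patternOccs, occ23_1_eq_card_patternOccs,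
    card_patternOccs_insertMax_zero (fun _ _ _ _ ⟨_, _⟩ => by omega),
    card_patternOccs_insertMax_zero (fun _ _ _ _ ⟨_, _⟩ => by omega)]

theorem isGood_insertMax_last (σ : Equiv.Perm (Fin n)) : IsGood (insertMax n σ) ↔ IsGood σ := by
  rw [IsGood, IsGood, occ13_2_eq_card_patternOccs, occ23_1_eq_card_patternOccs,
    occ13_2_eq_card_patternOccs, occ23_1_eq_card_patternOccs,
    patternOccs_insertMax_last (fun _ _ _ _ ⟨_, _⟩ => by omega),
    patternOccs_insertMax_last (fun _ _ _ _ ⟨_, _⟩ => by omega)]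

end Patterns

section AvoidingThirteenTwo

variable {N : ℕ} {f : ℕ → ℕ}

theorem mem_patternOccs_of_ascent (hf : Set.InjOn f (Set.Iio N))
    (h13 : patternOccs N Pattern13_2 f = ∅) {i j : ℕ} (hasc : f i < f (i + 1)) (hij : i + 1 < j)
    (hj : j < N) (hlt : f j < f (i + 1)) : (i, j) ∈ patternOccs N Pattern23_1 f := by
  refine mem_patternOccs.mpr ⟨hij, hj, ?_, hasc⟩
  have hne := hf.ne hj (show i < N by omega) (by omega)
  have := patternOccs_eq_empty_iff.mp h13 i j hij hj
  by_contra hge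
  exact this ⟨by omega, hlt⟩

theorem exists_mem_patternOccs_of_ascent (hf : Set.InjOn f (Set.Iio N))
    (h13 : patternOccs N Pattern13_2 f = ∅) {i m j : ℕ} (hi : i < m) (hasc : f i < f (i + 1))
    (hmj : m < j) (hj : j < N) (hlt : f j < f m) :
    ∃ i₀ < m, (i₀, j) ∈ patternOccs N Pattern23_1 f ∧
      (i₀ + 1 < m → (i₀, i₀ + 2) ∈ patternOccs N Pattern23_1 f) := by
  -- `i₀` is the last ascent before `m`: the letters from `i₀ + 1` to `m` decrease, so `f j` and
  -- `f (i₀ + 2)` lie below `f (i₀ + 1)`, hence below `f i₀` by avoidance of 13-2.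
  induction m with
  | zero => omega
  | succ m ih =>
    by_cases hm : f m < f (m + 1)
    · exact ⟨m, lt_add_one m, mem_patternOccs_of_ascent hf h13 hm (by omega) hj hlt,
        fun h => absurd h (lt_irrefl _)⟩
    have hdesc : f (m + 1) < f m :=
      (not_lt.mp hm).lt_of_ne (hf.ne (show m + 1 < N by omega) (show m < N by omega) (by omega))
    have him : i < m := by
      rcases (Nat.lt_succ_iff.mp hi).lt_or_eq with h | rfl
      · exact h
      · exact absurd hasc hm
    obtain ⟨i₀, hi₀, hocc, hnext⟩ := ih him (by omega) (hlt.trans hdesc)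
    refine ⟨i₀, by omega, hocc, fun h => ?_⟩
    rcases (show i₀ + 1 < m ∨ i₀ + 1 = m by omega) with h' | rfl
    · exact hnext h'
    · exact mem_patternOccs_of_ascent hf h13 (mem_patternOccs.mp hocc).2.2.2 (by omega) (by omega)
        hdesc

theorem strictAntiOn_Iic_of_not_ascent (hf : Set.InjOn f (Set.Iio N)) {m : ℕ} (hm : m < N)
    (h : ∀ i < m, ¬ f i < f (i + 1)) : StrictAntiOn f (Set.Iic m) := by
  refine strictAntiOn_Iic_of_succ_lt fun i hi => ?_
  rw [Order.succ_eq_add_one]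
  exact (not_lt.mp (h i hi)).lt_of_ne
    (hf.ne (show i + 1 < N by omega) (show i < N by omega) (by omega))

theorem strictAntiOn_Iic_of_forall_mem_patternOccs_le (hf : Set.InjOn f (Set.Iio N))
    (h13 : patternOccs N Pattern13_2 f = ∅) {m j : ℕ} (hmj : m < j) (hj : j < N)
    (hlt : f j < f m) (hO : ∀ p ∈ patternOccs N Pattern23_1 f, m ≤ p.1) :
    StrictAntiOn f (Set.Iic m) :=
  strictAntiOn_Iic_of_not_ascent hf (by omega) fun i hi hasc => by
    obtain ⟨i₀, hi₀, hocc, -⟩ := exists_mem_patternOccs_of_ascent hf h13 hi hasc hmj hj hlt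
    exact absurd (hO _ hocc) (by simp only; omega)

end AvoidingThirteenTwo

section PeakPerm

variable {n k : ℕ}

/-- For `k < 2` the values `n - 1, n - 2, …, 2, n, k, 1 - k`; for `2 ≤ k < n` the values
`n - 1, …, k + 1, k - 1, …, 1, k, n, 0`. -/
def peakVal (n k p : ℕ) : ℕ :=
  if k < 2 then
    if p + 2 < n then n - 1 - p else if p + 2 = n then n else if p + 1 = n then k else 1 - k
  else
    if p + k + 1 < n then n - 1 - p else if p + 2 < n then n - 2 - p
    else if p + 2 = n then k else if p + 1 = n then n else 0

noncomputable def peakPerm (n k : ℕ) : Equiv.Perm (Fin (n + 1)) :=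
  permOfFun (n + 1) (peakVal n k)

theorem permVal_peakPerm (hn : 3 ≤ n) (hk : k < n) {p : ℕ} (hp : p ≤ n) :
    permVal (peakPerm n k) p = peakVal n k p := by
  refine permVal_permOfFun ?_ ?_ (Nat.lt_succ_of_le hp)
  · intro q hq
    simp only [Set.mem_Iio] at hq ⊢
    unfold peakVal
    split_ifs <;> omega
  · intro q hq r hr h
    simp only [Set.mem_Iio] at hq hr
    unfold peakVal at h
    split_ifs at h <;> omega

theorem patternOccs_pattern13_2_peakVal (hn : 3 ≤ n) (hk : k < n) :
    patternOccs (n + 1) Pattern13_2 (peakVal n k) = ∅ := by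
  rw [patternOccs_eq_empty_iff]
  intro i j hij hj
  unfold peakVal
  split_ifs <;> omega

theorem card_patternOccs_pattern23_1_peakVal (hn : 3 ≤ n) (hk : k < n) :
    #(patternOccs (n + 1) Pattern23_1 (peakVal n k)) = 2 := by
  rw [card_eq_two]
  by_cases hk2 : k < 2
  · refine ⟨(n - 3, n - 1), (n - 3, n), by simp; omega, ?_⟩
    ext ⟨i, j⟩
    rw [mem_patternOccs]
    simp only [mem_insert, mem_singleton, Prod.mk.injEq]
    unfold peakVal
    split_ifs <;> omega
  · refine ⟨(n - 3, n), (n - 2, n), by simp; omega, ?_⟩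
    ext ⟨i, j⟩
    rw [mem_patternOccs]
    simp only [mem_insert, mem_singleton, Prod.mk.injEq]
    unfold peakVal
    split_ifs <;> omega

theorem isGood_peakPerm (hn : 3 ≤ n) (hk : k < n) : IsGood (peakPerm n k) := by
  have hval : ∀ i < n + 1, permVal (peakPerm n k) i = peakVal n k i :=
    fun i hi => permVal_peakPerm hn hk (Nat.le_of_lt_succ hi)
  rw [isGood_iff, patternOccs_congr hval, patternOccs_congr hval]
  exact ⟨patternOccs_pattern13_2_peakVal hn hk, card_patternOccs_pattern23_1_peakVal hn hk⟩

theorem permVal_peakPerm_zero_ne (hn : 3 ≤ n) (hk : k < n) : permVal (peakPerm n k) 0 ≠ n := by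
  rw [permVal_peakPerm hn hk (Nat.zero_le n)]
  unfold peakVal
  split_ifs <;> omega

theorem permVal_peakPerm_last_ne (hn : 3 ≤ n) (hk : k < n) : permVal (peakPerm n k) n ≠ n := by
  rw [permVal_peakPerm hn hk le_rfl]
  unfold peakVal
  split_ifs <;> omega

theorem peakVal_sub_two (hn : 3 ≤ n) : peakVal n k (n - 2) = if k < 2 then n else k := by
  unfold peakVal
  split_ifs <;> omega

theorem peakVal_sub_one (hn : 3 ≤ n) : peakVal n k (n - 1) = if k < 2 then k else n := by
  unfold peakVal
  split_ifs <;> omega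

theorem peakPerm_injOn (hn : 3 ≤ n) : Set.InjOn (peakPerm n) (Set.Iio n) := by
  intro k hk k' hk' h
  simp only [Set.mem_Iio] at hk hk'
  have h₁ : peakVal n k (n - 2) = peakVal n k' (n - 2) := by
    rw [← permVal_peakPerm hn hk (Nat.sub_le n 2), ← permVal_peakPerm hn hk' (Nat.sub_le n 2), h]
  have h₂ : peakVal n k (n - 1) = peakVal n k' (n - 1) := by
    rw [← permVal_peakPerm hn hk (Nat.sub_le n 1), ← permVal_peakPerm hn hk' (Nat.sub_le n 1), h]
  rw [peakVal_sub_two hn, peakVal_sub_two hn] at h₁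
  rw [peakVal_sub_one hn, peakVal_sub_one hn] at h₂
  split_ifs at h₁ h₂ <;> omega

end PeakPerm

section Classification

variable {m n : ℕ} {f : ℕ → ℕ}

theorem lt_of_injOn_of_ne_max (hf : Set.InjOn f (Set.Iio (n + 1))) (hbound : ∀ p, f p ≤ n)
    {t : ℕ} (ht : t ≤ n) (hmax : f t = n) {p : ℕ} (hp : p ≤ n) (hpt : p ≠ t) : f p < n :=
  lt_of_le_of_ne (hbound p) fun h => hpt (hf (show p < n + 1 by omega) (show t < n + 1 by omega)
    (h.trans hmax.symm))

theorem le_add_two_of_max_at (hf : Set.InjOn f (Set.Iio (n + 1))) (hbound : ∀ p, f p ≤ n)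
    (h13 : patternOccs (n + 1) Pattern13_2 f = ∅)
    (h23 : #(patternOccs (n + 1) Pattern23_1 f) = 2) {t : ℕ} (ht0 : 0 < t) (ht : t ≤ n)
    (hmax : f t = n) : n ≤ t + 2 := by
  obtain ⟨s, rfl⟩ : ∃ s, t = s + 1 := Nat.exists_eq_add_one.mpr ht0
  have hocc : ∀ j, s + 1 < j → j ≤ n → (s, j) ∈ patternOccs (n + 1) Pattern23_1 f := by
    intro j hj hjn
    refine mem_patternOccs_of_ascent hf h13 ?_ hj (by omega) ?_ <;>
      rw [hmax] <;> exact lt_of_injOn_of_ne_max hf hbound ht hmax (by omega) (by omega)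
  by_contra h
  have := two_lt_card.mpr ⟨_, hocc (s + 2) (by omega) (by omega), _, hocc (s + 3) (by omega)
    (by omega), _, hocc (s + 4) (by omega) (by omega), by simp, by simp, by simp⟩
  omega

theorem exists_eqOn_peakVal_lt_two (hf : Set.InjOn f (Set.Iio (m + 4)))
    (hbound : ∀ p, f p ≤ m + 3) (hmax : f (m + 1) = m + 3) (hanti : StrictAntiOn f (Set.Iic m))
    (hlt₂ : f (m + 2) < f m) (hlt₃ : f (m + 3) < f m) :
    ∃ k < 2, Set.EqOn f (peakVal (m + 3) k) (Set.Iic (m + 3)) := by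
  have hlt : ∀ p ≤ m + 3, p ≠ m + 1 → f p < m + 3 :=
    fun p => lt_of_injOn_of_ne_max hf hbound (by omega) hmax
  have hne₂₃ := hf.ne (show m + 2 < m + 4 by omega) (show m + 3 < m + 4 by omega) (by omega)
  have hge : ∀ p ≤ m, f m ≤ f p := fun p hp =>
    hanti.antitoneOn (by simpa using hp) (by simp) hp
  have hprefix : Set.EqOn f (fun p => m + 2 - p) (Set.Iic m) := by
    refine hanti.eqOn_of_mapsTo_finset (V := Icc 2 (m + 2)) (by simp) ?_ ?_ ?_
    · intro p (hp : p ≤ m) q (hq : q ≤ m) hpq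
      dsimp only
      omega
    · intro p (hp : p ≤ m)
      simp only [coe_Icc, Set.mem_Icc]
      have := hge p hp
      have := hlt p (by omega) (by omega)
      omega
    · intro p (hp : p ≤ m)
      simp only [coe_Icc, Set.mem_Icc]
      omega
  have hfm : f m = 2 := by simpa using hprefix (Set.mem_Iic.mpr le_rfl)
  refine ⟨f (m + 2), by omega, fun p hp => ?_⟩
  simp only [Set.mem_Iic] at hp
  unfold peakVal
  rcases (show p ≤ m ∨ p = m + 1 ∨ p = m + 2 ∨ p = m + 3 by omega) with hp | rfl | rfl | rfl
  · rw [hprefix (Set.mem_Iic.mpr hp)]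
    dsimp only
    split_ifs <;> omega
  all_goals split_ifs <;> omega

theorem exists_eqOn_peakVal_two_le (hf : Set.InjOn f (Set.Iio (m + 4)))
    (hbound : ∀ p, f p ≤ m + 3) (hzero : ∃ q < m + 4, f q = 0) (hmax : f (m + 2) = m + 3)
    (hanti : StrictAntiOn f (Set.Iic m)) (hasc : f m < f (m + 1)) (hlt₃ : f (m + 3) < f m) :
    ∃ k, 2 ≤ k ∧ k < m + 3 ∧ Set.EqOn f (peakVal (m + 3) k) (Set.Iic (m + 3)) := by
  have hlt : ∀ p ≤ m + 3, p ≠ m + 2 → f p < m + 3 :=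
    fun p => lt_of_injOn_of_ne_max hf hbound (by omega) hmax
  have hge : ∀ p ≤ m, f m ≤ f p := fun p hp =>
    hanti.antitoneOn (by simpa using hp) (by simp) hp
  have hz : f (m + 3) = 0 := by
    obtain ⟨q, hq, hfq⟩ := hzero
    rcases (show q ≤ m ∨ q = m + 1 ∨ q = m + 2 ∨ q = m + 3 by omega) with hq | rfl | rfl | rfl
    · have := hge q hq
      omega
    all_goals omega
  have hk := hlt (m + 1) (by omega) (by omega)
  have hprefix : Set.EqOn f (peakVal (m + 3) (f (m + 1))) (Set.Iic m) := by
    refine hanti.eqOn_of_mapsTo_finset (V := (Icc 1 (m + 2)).erase (f (m + 1))) ?_ ?_ ?_ ?_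
    · rw [card_erase_of_mem (by simp; omega)]
      simp
    · intro p (hp : p ≤ m) q (hq : q ≤ m) hpq
      unfold peakVal
      split_ifs <;> omega
    · intro p (hp : p ≤ m)
      simp only [coe_erase, coe_Icc, Set.mem_sdiff, Set.mem_Icc, Set.mem_singleton_iff]
      have := hge p hp
      have := hlt p (by omega) (by omega)
      have := hf.ne (show p < m + 4 by omega) (show m + 1 < m + 4 by omega) (by omega)
      omega
    · intro p (hp : p ≤ m)
      simp only [coe_erase, coe_Icc, Set.mem_sdiff, Set.mem_Icc, Set.mem_singleton_iff]
      unfold peakVal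
      split_ifs <;> omega
  refine ⟨f (m + 1), by omega, hk, fun p hp => ?_⟩
  simp only [Set.mem_Iic] at hp
  rcases (show p ≤ m ∨ p = m + 1 ∨ p = m + 2 ∨ p = m + 3 by omega) with hp | rfl | rfl | rfl
  · exact hprefix (Set.mem_Iic.mpr hp)
  all_goals unfold peakVal; split_ifs <;> omega

theorem exists_eqOn_peakVal_of_max_at_add_one (hf : Set.InjOn f (Set.Iio (m + 4)))
    (hbound : ∀ p, f p ≤ m + 3) (h13 : patternOccs (m + 4) Pattern13_2 f = ∅)
    (h23 : #(patternOccs (m + 4) Pattern23_1 f) = 2) (hmax : f (m + 1) = m + 3) :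
    ∃ k < 2, Set.EqOn f (peakVal (m + 3) k) (Set.Iic (m + 3)) := by
  have hlt : ∀ p ≤ m + 3, p ≠ m + 1 → f p < m + 3 :=
    fun p => lt_of_injOn_of_ne_max hf hbound (by omega) hmax
  have hasc : f m < f (m + 1) := hmax ▸ hlt m (by omega) (by omega)
  have hocc₂ : (m, m + 2) ∈ patternOccs (m + 4) Pattern23_1 f :=
    mem_patternOccs_of_ascent hf h13 hasc (by omega) (by omega)
      (hmax ▸ hlt (m + 2) (by omega) (by omega))
  have hocc₃ : (m, m + 3) ∈ patternOccs (m + 4) Pattern23_1 f :=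
    mem_patternOccs_of_ascent hf h13 hasc (by omega) (by omega)
      (hmax ▸ hlt (m + 3) (by omega) (by omega))
  have hlt₂ := (mem_patternOccs.mp hocc₂).2.2.1
  have hanti := strictAntiOn_Iic_of_forall_mem_patternOccs_le hf h13 (by omega) (by omega) hlt₂
    fun p hp => by
      rcases eq_or_eq_of_card_eq_two h23 hocc₂ hocc₃ (by simp) hp with rfl | rfl <;> exact le_rfl
  exact exists_eqOn_peakVal_lt_two hf hbound hmax hanti hlt₂ (mem_patternOccs.mp hocc₃).2.2.1

theorem mem_patternOccs_of_card_eq_two (hf : Set.InjOn f (Set.Iio (m + 4)))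
    (h13 : patternOccs (m + 4) Pattern13_2 f = ∅) (h23 : #(patternOccs (m + 4) Pattern23_1 f) = 2)
    (hocc : (m + 1, m + 3) ∈ patternOccs (m + 4) Pattern23_1 f) :
    (m, m + 3) ∈ patternOccs (m + 4) Pattern23_1 f := by
  obtain ⟨⟨i, j⟩, hij, hne⟩ :=
    exists_mem_ne (show 1 < #(patternOccs (m + 4) Pattern23_1 f) by omega) (m + 1, m + 3)
  obtain ⟨hij', hj, -, hasc⟩ := mem_patternOccs.mp hij
  obtain ⟨i₀, hi₀, hocc₀, hnext⟩ := exists_mem_patternOccs_of_ascent hf h13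
    (show i < m + 1 by simp only [ne_eq, Prod.mk.injEq] at hne; omega) hasc (by omega) (by omega)
    (mem_patternOccs.mp hocc).2.2.1
  rcases (show i₀ = m ∨ i₀ < m by omega) with hi₀m | hi₀m
  · exact hi₀m ▸ hocc₀
  · rcases eq_or_eq_of_card_eq_two h23 hocc hocc₀ (by simp; omega) (hnext (by omega)) with h | h <;>
      simp only [Prod.mk.injEq] at h <;> omega

theorem exists_eqOn_peakVal_of_max_at_add_two (hf : Set.InjOn f (Set.Iio (m + 4)))
    (hbound : ∀ p, f p ≤ m + 3) (hzero : ∃ q < m + 4, f q = 0)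
    (h13 : patternOccs (m + 4) Pattern13_2 f = ∅) (h23 : #(patternOccs (m + 4) Pattern23_1 f) = 2)
    (hmax : f (m + 2) = m + 3) :
    ∃ k, 2 ≤ k ∧ k < m + 3 ∧ Set.EqOn f (peakVal (m + 3) k) (Set.Iic (m + 3)) := by
  have hlt : ∀ p ≤ m + 3, p ≠ m + 2 → f p < m + 3 :=
    fun p => lt_of_injOn_of_ne_max hf hbound (by omega) hmax
  have hocc₁ : (m + 1, m + 3) ∈ patternOccs (m + 4) Pattern23_1 f :=
    mem_patternOccs_of_ascent hf h13 (hmax ▸ hlt (m + 1) (by omega) (by omega)) (by omega)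
      (by omega) (hmax ▸ hlt (m + 3) (by omega) (by omega))
  have hocc₀ := mem_patternOccs_of_card_eq_two hf h13 h23 hocc₁
  obtain ⟨-, -, hlt₃, hasc⟩ := mem_patternOccs.mp hocc₀
  have hanti := strictAntiOn_Iic_of_forall_mem_patternOccs_le hf h13 (by omega) (by omega) hlt₃
    fun p hp => by
      rcases eq_or_eq_of_card_eq_two h23 hocc₁ hocc₀ (by simp) hp with rfl | rfl <;> simp
  exact exists_eqOn_peakVal_two_le hf hbound hzero hmax hanti hasc hlt₃

end Classification

section Counting

variable {n : ℕ}

theorem peakPerm_eq_of_eqOn {k : ℕ} (hn : 3 ≤ n) (hk : k < n) {π : Equiv.Perm (Fin (n + 1))}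
    (h : Set.EqOn (permVal π) (peakVal n k) (Set.Iic n)) : peakPerm n k = π :=
  Equiv.Perm.ext_permVal fun p hp => by
    rw [permVal_peakPerm hn hk (Nat.le_of_lt_succ hp), h (Set.mem_Iic.mpr (Nat.le_of_lt_succ hp))]

theorem isGood_and_max_interior_iff (hn : 3 ≤ n) (π : Equiv.Perm (Fin (n + 1))) :
    (IsGood π ∧ permVal π 0 ≠ n ∧ permVal π n ≠ n) ↔ ∃ k < n, peakPerm n k = π := by
  constructor
  · rintro ⟨hgood, h0, hlast⟩
    obtain ⟨h13, h23⟩ := (isGood_iff π).mp hgood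
    obtain ⟨t, ht, hmax⟩ := exists_permVal_eq π (Nat.lt_succ_self n)
    have ht0 : t ≠ 0 := by rintro rfl; exact h0 hmax
    have htn : t ≠ n := by rintro rfl; exact hlast hmax
    have := le_add_two_of_max_at (permVal_injOn π) (permVal_le π) h13 h23 (Nat.pos_of_ne_zero ht0)
      (by omega) hmax
    obtain ⟨m, rfl⟩ : ∃ m, n = m + 3 := ⟨n - 3, by omega⟩
    rcases (show t = m + 1 ∨ t = m + 2 by omega) with rfl | rfl
    · obtain ⟨k, hk, heq⟩ := exists_eqOn_peakVal_of_max_at_add_one (permVal_injOn π)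
        (permVal_le π) h13 h23 hmax
      exact ⟨k, by omega, peakPerm_eq_of_eqOn hn (by omega) heq⟩
    · obtain ⟨k, -, hk, heq⟩ := exists_eqOn_peakVal_of_max_at_add_two (permVal_injOn π)
        (permVal_le π) (exists_permVal_eq π (by omega)) h13 h23 hmax
      exact ⟨k, hk, peakPerm_eq_of_eqOn hn hk heq⟩
  · rintro ⟨k, hk, rfl⟩
    exact ⟨isGood_peakPerm hn hk, permVal_peakPerm_zero_ne hn hk, permVal_peakPerm_last_ne hn hk⟩

theorem card_isGood_max_interior (hn : 3 ≤ n) :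
    #{π : Equiv.Perm (Fin (n + 1)) | IsGood π ∧ permVal π 0 ≠ n ∧ permVal π n ≠ n} = n := by
  have : ({π | IsGood π ∧ permVal π 0 ≠ n ∧ permVal π n ≠ n} : Finset (Equiv.Perm (Fin (n + 1)))) =
      (range n).image (peakPerm n) := by
    ext π
    simp only [mem_filter, mem_univ, true_and, mem_image, mem_range,
      isGood_and_max_interior_iff hn]
  rw [this, card_image_of_injOn (by simpa using peakPerm_injOn hn), card_range]

noncomputable def goodCount (n : ℕ) : ℕ := #{π : Equiv.Perm (Fin n) | IsGood π}

theorem goodCount_succ (hn : 3 ≤ n) : goodCount (n + 1) = 2 * goodCount n + n := by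
  have hfirst := card_filter_permVal_eq IsGood (Nat.zero_le n)
  have hlast := card_filter_permVal_eq IsGood (le_refl n)
  simp only [isGood_insertMax_zero, isGood_insertMax_last] at hfirst hlast
  have hexcl : ∀ π : Equiv.Perm (Fin (n + 1)), permVal π 0 = n → permVal π n ≠ n :=
    fun π h0 hlast => by
      have := permVal_injOn π (show 0 < n + 1 by omega) (show n < n + 1 by omega)
        (h0.trans hlast.symm)
      omega
  have hsplit₀ := card_filter_add_card_filter_not
    (s := univ.filter fun π : Equiv.Perm (Fin (n + 1)) => IsGood π) (fun π => permVal π 0 = n)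
  have hsplit₁ := card_filter_add_card_filter_not
    (s := univ.filter fun π : Equiv.Perm (Fin (n + 1)) => IsGood π ∧ permVal π 0 ≠ n)
    (fun π => permVal π n = n)
  have hinterior := card_isGood_max_interior hn
  simp only [filter_filter, and_assoc, ← ne_eq] at hsplit₀ hsplit₁ hinterior
  have hcongr : #{π : Equiv.Perm (Fin (n + 1)) | IsGood π ∧ permVal π 0 ≠ n ∧ permVal π n = n} =
      #{π | IsGood π ∧ permVal π n = n} :=
    congrArg card <| filter_congr fun π _ =>
      ⟨fun h => ⟨h.1, h.2.2⟩, fun h => ⟨h.1, fun h0 => hexcl π h0 h.2, h.2⟩⟩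
  unfold goodCount
  omega

theorem goodCount_eq_zero_of_le_three (hn : n ≤ 3) : goodCount n = 0 := by
  refine card_eq_zero.mpr (filter_eq_empty_iff.mpr fun π _ hgood => ?_)
  have := card_le_card (patternOccs_subset_of_le_three (C := Pattern23_1) (f := permVal π) hn)
  rw [card_singleton, ← occ23_1_eq_card_patternOccs, hgood.2] at this
  omega

theorem goodCount_add_add_one (hn : 3 ≤ n) : goodCount n + n + 1 = 2 ^ (n - 1) := by
  induction n, hn using Nat.le_induction with
  | base => rw [goodCount_eq_zero_of_le_three le_rfl]; rfl
  | succ n hn ih =>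
    rw [goodCount_succ hn, show n + 1 - 1 = n - 1 + 1 by omega, pow_succ]
    omega

theorem goodCount_eq (n : ℕ) : goodCount n = 2 ^ (n - 1) - n - 1 := by
  rcases le_or_gt n 3 with hn | hn
  · rw [goodCount_eq_zero_of_le_three hn]
    interval_cases n <;> rfl
  · have := goodCount_add_add_one hn.le
    omega

end Counting

theorem stmt13_general (n : ℕ) :
    (Finset.univ.filter (fun π : Equiv.Perm (Fin n) =>
      occ13_2 π = 0 ∧ occ23_1 π = 2)).card = 2 ^ (n - 1) - n - 1 :=
  goodCount_eq n

theorem stmt13 (n : ℕ) (hn : 3 ≤ n) :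
    (Finset.univ.filter (fun π : Equiv.Perm (Fin n) =>
      occ13_2 π = 0 ∧ occ23_1 π = 2)).card = 2 ^ (n - 1) - n - 1 :=
  stmt13_general n
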